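/- arXiv:1605.06852 — 5 statements merged into one kernel-verified Lean document; each statement's English description precedes it below -/
import Mathlib

section
/- The only t-spanner of the greedy t-spanner is itself: if H is the output of the greedy spanner algorithm with stretch parameter t ≥ 1 on a weighted graph G, and H' is a subgraph of H that is a t-spanner for H, then H' = H (i.e., H' contains every edge of H). -/
open SimpleGraph
open scoped ENNReal

variable {V : Type*} [Fintype V] [DecidableEq V]

/-- The simple graph determined by a finite edge set. -/
def toSG (E : Finset (Sym2 V)) : SimpleGraph V := SimpleGraph.fromEdgeSet (↑E)

/-- Weight (in `ℝ≥0∞`) of a walk, given edge weights `w`. -/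
noncomputable def walkWeight (w : Sym2 V → ℝ) {G : SimpleGraph V} {u v : V}
    (p : G.Walk u v) : ℝ≥0∞ :=
  (p.edges.map fun e => ENNReal.ofReal (w e)).sum

/-- Shortest-path distance (in `ℝ≥0∞`) between the endpoints of the pair `e`
in the graph with edge set `H` and edge weights `w`.  (`⊤` if disconnected.) -/
noncomputable def edist (H : Finset (Sym2 V)) (w : Sym2 V → ℝ) (e : Sym2 V) : ℝ≥0∞ :=
  sInf {x | ∃ (u v : V) (p : (toSG H).Walk u v), e = s(u, v) ∧ walkWeight w p = x}

/-- Total weight of an edge set. -/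
noncomputable def gweight (w : Sym2 V → ℝ) (H : Finset (Sym2 V)) : ℝ := ∑ e ∈ H, w e

/-- `H` is a `t`-spanner of the graph with edge set `E` and weights `w`. -/
def IsSpanner (w : Sym2 V → ℝ) (t : ℝ) (E H : Finset (Sym2 V)) : Prop :=
  H ⊆ E ∧ ∀ u v : V, edist H w s(u, v) ≤ ENNReal.ofReal t * edist E w s(u, v)

open Classical in
/-- One pass of the greedy algorithm over a list of candidate edges. -/
noncomputable def greedyList (w : Sym2 V → ℝ) (t : ℝ) :
    List (Sym2 V) → Finset (Sym2 V) → Finset (Sym2 V)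
  | [], H => H
  | e :: l, H =>
      greedyList w t l (if ENNReal.ofReal (t * w e) < edist H w e then insert e H else H)

/-- `H` is an output of the greedy `t`-spanner algorithm on the graph with
edge set `E` and weights `w`: the edges of `E` are processed in some
non-decreasing order of weight. -/
def IsGreedy (w : Sym2 V → ℝ) (t : ℝ) (E H : Finset (Sym2 V)) : Prop :=
  ∃ l : List (Sym2 V), l.Nodup ∧ (∀ e, e ∈ l ↔ e ∈ E) ∧
    l.Pairwise (fun a b => w a ≤ w b) ∧ greedyList w t l ∅ = H

/-- `T` is a minimum spanning tree of the graph with edge set `E` and weights `w`. -/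
def IsMST (w : Sym2 V → ℝ) (E T : Finset (Sym2 V)) : Prop :=
  T ⊆ E ∧ (toSG T).IsTree ∧
    ∀ T' ⊆ E, (toSG T').IsTree → gweight w T ≤ gweight w T'

/-- The edge set of the complete graph on `V`. -/
def completeE (V : Type*) [Fintype V] [DecidableEq V] : Finset (Sym2 V) :=
  Finset.univ.filter fun e => ¬ e.IsDiag

/-- Metric distance as a weight function on unordered pairs. -/
noncomputable def mw (V : Type*) [MetricSpace V] : Sym2 V → ℝ :=
  Sym2.lift ⟨dist, fun a b => dist_comm a b⟩

/-- The weight function of the metric space induced by the graph with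
edge set `H` and weights `w` (shortest-path distances of pairs). -/
noncomputable def indw (H : Finset (Sym2 V)) (w : Sym2 V → ℝ) : Sym2 V → ℝ :=
  fun e => (edist H w e).toReal

/-- `d` satisfies the doubling property with doubling dimension (at most) `k`:
every ball of radius `r` can be covered by at most `2 ^ k` balls of radius `r / 2`. -/
def HasDoublingDim {M : Type*} (d : M → M → ℝ) (k : ℕ) : Prop :=
  ∀ (x : M) (r : ℝ), ∃ s : Finset M, s.card ≤ 2 ^ k ∧
    ∀ y, d x y ≤ r → ∃ c ∈ s, d c y ≤ r / 2


/-!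
Suppose an edge `e = uv` of the greedy spanner `H` is missing from `H'`. Since `H'` is a
`t`-spanner of `H`, it contains a `u`–`v` path `P` of weight at most `t * w e`. Among the
edges of the cycle `P + e`, let `f` be the one the greedy algorithm examined last; all the
other edges of the cycle were already present at that moment. If `f = e`, the path `P`
shows that `e` would have been rejected. Otherwise the rest of the cycle is a detour for `f`
of weight `w P + w e - w f ≤ t * w e + w e - w f ≤ t * w f`, because `w e ≤ w f`, so `f`
would have been rejected.
-/

namespace List

theorem exists_eq_append_cons_forall_not_of_exists {α : Type*} {l : List α} {p : α → Prop}
    (h : ∃ a ∈ l, p a) : ∃ l₁ a l₂, l = l₁ ++ a :: l₂ ∧ p a ∧ ∀ b ∈ l₂, ¬ p b := by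
  induction l with
  | nil => simp at h
  | cons a l ih =>
    by_cases hl : ∃ b ∈ l, p b
    · obtain ⟨l₁, b, l₂, rfl, hb, hl₂⟩ := ih hl
      exact ⟨a :: l₁, b, l₂, rfl, hb, hl₂⟩
    · simp only [not_exists, not_and] at hl
      obtain ⟨b, hb, hpb⟩ := h
      rcases mem_cons.1 hb with rfl | hb
      · exact ⟨[], b, l, rfl, hpb, hl⟩
      · exact absurd hpb (hl b hb)

end List

namespace SimpleGraph.Walk

variable {α : Type*} {G : SimpleGraph α}

theorem exists_edges_eq_append_cons {u v : α} (p : G.Walk u v) {f : Sym2 α}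
    (hf : f ∈ p.edges) : ∃ (x y : α) (q : G.Walk u x) (r : G.Walk y v),
      f = s(x, y) ∧ p.edges = q.edges ++ f :: r.edges := by
  induction p with
  | nil => simp at hf
  | @cons a b c hab p ih =>
    rw [edges_cons] at hf
    by_cases hfab : f = s(a, b)
    · exact ⟨a, b, nil, p, hfab, by simp [hfab]⟩
    · obtain ⟨x, y, q, r, hfxy, hp⟩ := ih ((List.mem_cons.1 hf).resolve_left hfab)
      exact ⟨x, y, cons hab q, r, hfxy, by simp [hp]⟩

end SimpleGraph.Walk

section WalkWeight

variable {α : Type*} {G G' : SimpleGraph α} {w : Sym2 α → ℝ} {u v : α}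

theorem walkWeight_eq_of_edges_eq {u' v' : α} {p : G.Walk u v} {q : G'.Walk u' v'}
    (h : p.edges = q.edges) : walkWeight w p = walkWeight w q := by
  rw [walkWeight, walkWeight, h]

theorem walkWeight_reverse (p : G.Walk u v) : walkWeight w p.reverse = walkWeight w p := by
  simp [walkWeight, List.sum_reverse]

theorem walkWeight_bypass_le [DecidableEq α] (p : G.Walk u v) :
    walkWeight w p.bypass ≤ walkWeight w p :=
  (p.edges_bypass_sublist_edges.map _).sum_le_sum fun _ _ => zero_le

/-- Closing the trail `p` by the edge `s(u, v)` and then deleting its edge `f` leaves a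
detour `W` between the endpoints of `f`. -/
theorem exists_detour_of_mem_edges {p : G.Walk u v} (hp : p.edges.Nodup) (huv : G.Adj u v)
    {f : Sym2 α} (hf : f ∈ p.edges) : ∃ (x y : α) (W : G.Walk x y), f = s(x, y) ∧
      walkWeight w W + ENNReal.ofReal (w f) = walkWeight w p + ENNReal.ofReal (w s(u, v)) ∧
      ∀ g ∈ W.edges, g = s(u, v) ∨ (g ∈ p.edges ∧ g ≠ f) := by
  obtain ⟨x, y, q, r, hfxy, hpqr⟩ := p.exists_edges_eq_append_cons hf
  have hfqr : f ∉ q.edges ++ r.edges := (List.nodup_cons.1 (List.nodup_middle.1 (hpqr ▸ hp))).1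
  refine ⟨x, y, q.reverse.append (Walk.cons huv r.reverse), hfxy, ?_, fun g hg => ?_⟩
  · simp only [walkWeight, hpqr, Walk.edges_append, Walk.edges_cons, Walk.edges_reverse,
      List.map_append, List.map_cons, List.map_reverse, List.sum_append, List.sum_cons,
      List.sum_reverse]
    ring
  · simp only [Walk.edges_append, Walk.edges_cons, Walk.edges_reverse, List.mem_append,
      List.mem_cons, List.mem_reverse] at hg
    rcases hg with hg | rfl | hg
    · exact .inr ⟨by simp [hpqr, hg], fun h => hfqr (h ▸ List.mem_append_left _ hg)⟩
    · exact .inl rfl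
    · exact .inr ⟨by simp [hpqr, hg], fun h => hfqr (h ▸ List.mem_append_right _ hg)⟩

end WalkWeight

section ShortestPath

variable {α : Type*} {w : Sym2 α → ℝ} {S T : Finset (Sym2 α)} {u v : α}

theorem toSG_mono (h : S ⊆ T) : toSG S ≤ toSG T :=
  fromEdgeSet_mono (Finset.coe_subset.2 h)

theorem mem_of_mem_edges_toSG {p : (toSG S).Walk u v} {g : Sym2 α} (hg : g ∈ p.edges) :
    g ∈ S := by
  have h := p.edges_subset_edgeSet hg
  rw [toSG, edgeSet_fromEdgeSet] at h
  exact h.1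

theorem edist_le_walkWeight {G : SimpleGraph α} (p : G.Walk u v) (hp : ∀ g ∈ p.edges, g ∈ S) :
    edist S w s(u, v) ≤ walkWeight w p := by
  have hS : ∀ g ∈ p.edges, g ∈ (toSG S).edgeSet := fun g hg => by
    rw [toSG, edgeSet_fromEdgeSet]
    exact ⟨hp g hg, G.not_isDiag_of_mem_edgeSet (p.edges_subset_edgeSet hg)⟩
  refine sInf_le ⟨u, v, p.transfer (toSG S) hS, rfl, ?_⟩
  exact walkWeight_eq_of_edges_eq (p.edges_transfer hS)

theorem edist_le_ofReal_of_mem {e : Sym2 α} (he : e ∈ S) :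
    edist S w e ≤ ENNReal.ofReal (w e) := by
  induction e using Sym2.ind with
  | _ x y =>
    by_cases hxy : x = y
    · subst hxy
      exact (edist_le_walkWeight (G := ⊥) .nil (by simp)).trans zero_le
    · have hp := edist_le_walkWeight (w := w) (S := S)
        (Walk.cons ((top_adj x y).2 hxy) .nil) (by simpa using he)
      simpa [walkWeight] using hp

theorem exists_isPath_walkWeight_eq_edist [Fintype α] [DecidableEq α]
    (h : edist S w s(u, v) ≠ ⊤) :
    ∃ p : (toSG S).Walk u v, p.IsPath ∧ walkWeight w p = edist S w s(u, v) := by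
  classical
  have hle :
      ⨅ p : (toSG S).Path u v, walkWeight w (p : (toSG S).Walk u v) ≤ edist S w s(u, v) := by
    refine le_sInf ?_
    rintro _ ⟨u', v', p, huv, rfl⟩
    rcases Sym2.eq_iff.1 huv with ⟨rfl, rfl⟩ | ⟨rfl, rfl⟩
    · exact iInf_le_of_le p.toPath (walkWeight_bypass_le p)
    · exact iInf_le_of_le p.reverse.toPath
        ((walkWeight_bypass_le p.reverse).trans_eq (walkWeight_reverse p))
  have : Nonempty ((toSG S).Path u v) := by
    by_contra hempty
    have := not_nonempty_iff.1 hempty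
    rw [iInf_of_empty] at hle
    exact h (top_unique hle)
  obtain ⟨p, hp⟩ := exists_eq_ciInf_of_finite
    (f := fun p : (toSG S).Path u v => walkWeight w (p : (toSG S).Walk u v))
  exact ⟨p, p.2, le_antisymm (hp ▸ hle) (edist_le_walkWeight _ fun g => mem_of_mem_edges_toSG)⟩

theorem edist_le_mul_of_mem_cycle {G : SimpleGraph α} {p : G.Walk u v} (hp : p.edges.Nodup)
    (huv : G.Adj u v) (hep : s(u, v) ∉ p.edges) {f : Sym2 α} (hf : f ∈ p.edges)
    (hS : ∀ g, (g = s(u, v) ∨ g ∈ p.edges) → g ≠ f → g ∈ S) {c : ℝ≥0∞}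
    (hpw : walkWeight w p ≤ c * ENNReal.ofReal (w s(u, v))) (hwef : w s(u, v) ≤ w f) :
    edist S w f ≤ c * ENNReal.ofReal (w f) := by
  obtain ⟨x, y, W, rfl, hWw, hW⟩ := exists_detour_of_mem_edges (w := w) hp huv hf
  have hef : s(u, v) ≠ s(x, y) := fun h => hep (by rwa [h])
  have hWS : edist S w s(x, y) ≤ walkWeight w W := edist_le_walkWeight W fun g hg =>
    (hW g hg).elim (fun h => hS g (.inl h) (h ▸ hef)) fun h => hS g (.inr h.1) h.2
  refine (ENNReal.add_le_add_iff_right (ENNReal.ofReal_ne_top (r := w s(x, y)))).1 ?_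
  calc edist S w s(x, y) + ENNReal.ofReal (w s(x, y))
      ≤ walkWeight w W + ENNReal.ofReal (w s(x, y)) := by gcongr
    _ = walkWeight w p + ENNReal.ofReal (w s(u, v)) := hWw
    _ ≤ c * ENNReal.ofReal (w s(u, v)) + ENNReal.ofReal (w s(u, v)) := by gcongr
    _ ≤ c * ENNReal.ofReal (w s(x, y)) + ENNReal.ofReal (w s(x, y)) := by gcongr

end ShortestPath

theorem ENNReal.ofReal_mul_ofReal_le (p q : ℝ) :
    ENNReal.ofReal p * ENNReal.ofReal q ≤ ENNReal.ofReal (p * q) := by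
  by_cases hp : 0 ≤ p
  · rw [ENNReal.ofReal_mul hp]
  · simp [ENNReal.ofReal_of_nonpos (le_of_not_ge hp)]

section Greedy

variable {α : Type*} [DecidableEq α] {w : Sym2 α → ℝ} {t : ℝ}

theorem greedyList_append (l₁ l₂ : List (Sym2 α)) (S : Finset (Sym2 α)) :
    greedyList w t (l₁ ++ l₂) S = greedyList w t l₂ (greedyList w t l₁ S) := by
  induction l₁ generalizing S with
  | nil => rfl
  | cons e l ih => exact ih _

theorem greedyList_subset_union (l : List (Sym2 α)) (S : Finset (Sym2 α)) :
    greedyList w t l S ⊆ S ∪ l.toFinset := by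
  induction l generalizing S with
  | nil => simp [greedyList]
  | cons e l ih =>
    refine (ih _).trans ?_
    simp only [List.toFinset_cons]
    split_ifs <;> grind

theorem mem_greedyList_of_mem_append {l₁ l₂ : List (Sym2 α)} {S : Finset (Sym2 α)}
    {g : Sym2 α} (hg : g ∈ greedyList w t (l₁ ++ l₂) S) (hgl₂ : g ∉ l₂) :
    g ∈ greedyList w t l₁ S := by
  rw [greedyList_append] at hg
  simpa [hgl₂] using greedyList_subset_union l₂ _ hg

theorem lt_edist_of_mem_greedyList {l₁ l₂ : List (Sym2 α)} {f : Sym2 α}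
    (hnd : (l₁ ++ f :: l₂).Nodup) (hf : f ∈ greedyList w t (l₁ ++ f :: l₂) ∅) :
    ENNReal.ofReal (t * w f) < edist (greedyList w t l₁ ∅) w f := by
  have hfl : f ∉ l₁ ++ l₂ := (List.nodup_cons.1 (List.nodup_middle.1 hnd)).1
  by_contra hlt
  rw [greedyList_append, greedyList, if_neg hlt] at hf
  rcases Finset.mem_union.1 (greedyList_subset_union l₂ _ hf) with hf | hf
  · exact hfl (List.mem_append_left _ (by simpa using greedyList_subset_union l₁ ∅ hf))
  · exact hfl (List.mem_append_right _ (List.mem_toFinset.1 hf))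

theorem lt_walkWeight_of_mem_greedyList {l : List (Sym2 α)} (hnd : l.Nodup)
    (hsort : l.Pairwise fun a b => w a ≤ w b) {u v : α} (he : s(u, v) ∈ greedyList w t l ∅)
    (P : (toSG (greedyList w t l ∅)).Walk u v) (hP : P.IsPath) (heP : s(u, v) ∉ P.edges) :
    ENNReal.ofReal t * ENNReal.ofReal (w s(u, v)) < walkWeight w P := by
  by_contra! hPw
  have hHl : ∀ g ∈ greedyList w t l ∅, g ∈ l := fun g hg => by
    simpa using greedyList_subset_union l ∅ hg
  -- `f` is the edge of the cycle `P + e` that the greedy algorithm examined last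
  obtain ⟨l₁, f, l₂, rfl, hf, hl₂⟩ := List.exists_eq_append_cons_forall_not_of_exists
    (p := fun g => g = s(u, v) ∨ g ∈ P.edges) ⟨_, hHl _ he, .inl rfl⟩
  set S := greedyList w t l₁ ∅
  have hmem : ∀ g, (g = s(u, v) ∨ g ∈ P.edges) → g ∈ greedyList w t (l₁ ++ f :: l₂) ∅ :=
    fun g hg => hg.elim (· ▸ he) mem_of_mem_edges_toSG
  have hS : ∀ g, (g = s(u, v) ∨ g ∈ P.edges) → g ≠ f → g ∈ S := fun g hg hgf =>
    mem_greedyList_of_mem_append (hmem g hg) (by simpa [hgf] using fun h => hl₂ g h hg)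
  have hcond : ENNReal.ofReal t * ENNReal.ofReal (w f) < edist S w f :=
    (ENNReal.ofReal_mul_ofReal_le _ _).trans_lt (lt_edist_of_mem_greedyList hnd (hmem f hf))
  rcases hf with rfl | hfP
  · have hPS : edist S w s(u, v) ≤ walkWeight w P := edist_le_walkWeight P fun g hg =>
      hS g (.inr hg) (ne_of_mem_of_not_mem hg heP)
    exact (hcond.trans_le (hPS.trans hPw)).false
  · have huv : u ≠ v := by
      rintro rfl
      simp [(Walk.isPath_iff_nil.1 hP).eq_nil] at hfP
    have hadj : (toSG (greedyList w t (l₁ ++ f :: l₂) ∅)).Adj u v := by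
      rw [toSG, fromEdgeSet_adj]
      exact ⟨he, huv⟩
    have hwef : w s(u, v) ≤ w f := by
      have hel₁ : s(u, v) ∈ l₁ := by
        have := hHl _ he
        simp only [List.mem_append, List.mem_cons] at this
        refine this.resolve_right fun h => h.elim (fun h => heP (h ▸ hfP)) fun h => ?_
        exact hl₂ _ h (.inl rfl)
      exact List.pairwise_append.1 hsort |>.2.2 _ hel₁ _ List.mem_cons_self
    exact (hcond.trans_le
      (edist_le_mul_of_mem_cycle hP.isTrail.edges_nodup hadj heP hfP hS hPw hwef)).false

end Greedy

theorem greedy_self_spanner_general (E H H' : Finset (Sym2 V)) (w : Sym2 V → ℝ) (t : ℝ)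
    (hH : IsGreedy w t E H) (hH' : IsSpanner w t H H') :
    H' = H := by
  obtain ⟨l, hnd, -, hsort, rfl⟩ := hH
  obtain ⟨hsub, hspan⟩ := hH'
  refine hsub.antisymm fun e he => by_contra fun he' => ?_
  induction e using Sym2.ind with
  | _ u v =>
    have hbound : edist H' w s(u, v) ≤ ENNReal.ofReal t * ENNReal.ofReal (w s(u, v)) :=
      (hspan u v).trans (mul_le_mul_right (edist_le_ofReal_of_mem he) _)
    obtain ⟨P, hP, hPw⟩ := exists_isPath_walkWeight_eq_edist <|
      ne_top_of_le_ne_top (ENNReal.mul_ne_top ENNReal.ofReal_ne_top ENNReal.ofReal_ne_top) hbound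
    have heP : s(u, v) ∉ (P.mapLe (toSG_mono hsub)).edges := by
      rw [Walk.edges_mapLe_eq_edges]
      exact fun h => he' (mem_of_mem_edges_toSG h)
    have hlong := lt_walkWeight_of_mem_greedyList hnd hsort he _ (hP.mapLe _) heP
    rw [walkWeight_eq_of_edges_eq (Walk.edges_mapLe_eq_edges _ _), hPw] at hlong
    exact hlong.not_ge hbound

/-- The only `t`-spanner of the greedy `t`-spanner is itself:
if `H` is the output of the greedy algorithm with stretch `t ≥ 1` on a weighted
graph `G = (V, E, w)` with positive edge weights, and `H'` is a subgraph of `H`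
that is a `t`-spanner for `H`, then `H' = H`. -/
theorem greedy_self_spanner (E H H' : Finset (Sym2 V)) (w : Sym2 V → ℝ) (t : ℝ)
    (ht : 1 ≤ t) (hw : ∀ e ∈ E, 0 < w e) (hconn : (toSG E).Connected)
    (hH : IsGreedy w t E H) (hH' : IsSpanner w t H H') :
    H' = H :=
  greedy_self_spanner_general E H H' w t hH hH'
end

section
/- The greedy t-spanner H of a weighted graph G contains all edges of some minimum spanning tree of G; consequently G and H share a common MST. -/
open SimpleGraph
open scoped ENNReal

variable {V : Type*} [Fintype V] [DecidableEq V]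

/-! Run Kruskal's algorithm on the edges of `H`, in the greedy order. The greedy algorithm and
Kruskal's algorithm both drop an edge only when its endpoints are already connected by the edges
kept so far. Hence for every threshold `c`, the edges of weight `≤ c` kept by either algorithm
connect the same pairs as the edges of weight `≤ c` of `E`. A forest with `k` edges has
`|V| - k` components, so the Kruskal forest `Z` has at every threshold at least as many edges of
weight `≤ c` as any spanning tree; equal cardinalities then force `w(Z) ≤ w(T)`. -/

namespace SimpleGraph

variable {W : Type*} {G G' : SimpleGraph W}

def Spans (G : SimpleGraph W) : Sym2 W → Prop :=
  Sym2.lift ⟨G.Reachable, fun _ _ => propext reachable_comm⟩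

@[simp]
lemma spans_mk {u v : W} : G.Spans s(u, v) ↔ G.Reachable u v := Iff.rfl

lemma spans_of_isDiag {e : Sym2 W} (he : e.IsDiag) : G.Spans e := by
  induction e using Sym2.ind with
  | _ u v => rw [Sym2.mk_isDiag_iff.mp he, spans_mk]

lemma Spans.mono (hle : G ≤ G') {e : Sym2 W} (he : G.Spans e) : G'.Spans e := by
  induction e using Sym2.ind with
  | _ u v => exact Reachable.mono hle he

lemma reachable_le_of_adj_le (h : G.Adj ≤ G'.Reachable) : G.Reachable ≤ G'.Reachable := by
  rintro x y ⟨p⟩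
  induction p with
  | nil => rfl
  | cons hadj _ ih => exact (h _ _ hadj).trans ih

lemma card_connectedComponent_le_of_reachable_le [Finite W] (h : G.Reachable ≤ G'.Reachable) :
    Nat.card G'.ConnectedComponent ≤ Nat.card G.ConnectedComponent := by
  refine Nat.card_le_card_of_surjective
    (ConnectedComponent.lift G'.connectedComponentMk fun x y p _ =>
      ConnectedComponent.eq.mpr (h _ _ p.reachable)) fun C => ?_
  induction C using ConnectedComponent.ind with
  | _ x => exact ⟨G.connectedComponentMk x, rfl⟩

lemma card_connectedComponent_bot :
    Nat.card (⊥ : SimpleGraph W).ConnectedComponent = Nat.card W := by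
  refine (Nat.card_eq_of_bijective (⊥ : SimpleGraph W).connectedComponentMk
    ⟨fun x y hxy => reachable_bot.mp (ConnectedComponent.exact hxy), fun C => ?_⟩).symm
  induction C using ConnectedComponent.ind with
  | _ x => exact ⟨x, rfl⟩

lemma card_connectedComponent_sup_edge_add_one [Finite W] {u v : W} (huv : ¬G.Reachable u v) :
    Nat.card (G ⊔ edge u v).ConnectedComponent + 1 = Nat.card G.ConnectedComponent := by
  classical
  set G' := G ⊔ edge u v
  have hG'uv : G'.Reachable u v :=
    ((edge_adj u v u v).mpr ⟨Or.inl ⟨rfl, rfl⟩, fun h => huv (h ▸ Reachable.rfl)⟩).reachable.mono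
      le_sup_right
  -- `σ` merges the component of `v` into that of `u`; it descends to the inverse of the
  -- surjection `G.ConnectedComponent → G'.ConnectedComponent` off the component of `v`.
  let σ : W → G.ConnectedComponent := fun x =>
    if G.Reachable x v then G.connectedComponentMk u else G.connectedComponentMk x
  have hσ : ∀ x y, G'.Reachable x y → σ x = σ y := by
    rintro x y ⟨p⟩
    induction p with
    | nil => rfl
    | @cons x y _ hxy _ ih =>
      refine Eq.trans ?_ ih
      rcases hxy with hxy | hxy
      · have hx : G.Reachable x v ↔ G.Reachable y v :=
          ⟨hxy.reachable.symm.trans, hxy.reachable.trans⟩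
        simp only [σ, hx, ConnectedComponent.eq.mpr hxy.reachable]
      · rcases ((edge_adj _ _ _ _).mp hxy).1 with ⟨rfl, rfl⟩ | ⟨rfl, rfl⟩ <;> simp [σ]
  let g : G'.ConnectedComponent → G.ConnectedComponent :=
    ConnectedComponent.lift σ fun x y p _ => hσ x y p.reachable
  have hg_mk : ∀ x, g (G'.connectedComponentMk x) = σ x := fun _ => rfl
  have hg : Function.LeftInverse (ConnectedComponent.map (Hom.ofLE le_sup_left)) g := by
    intro C
    induction C using ConnectedComponent.ind with | _ x => ?_
    rw [hg_mk]
    by_cases hx : G.Reachable x v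
    · simp only [σ, if_pos hx, ConnectedComponent.map_mk, Hom.coe_ofLE, id, ConnectedComponent.eq]
      exact hG'uv.trans (hx.mono le_sup_left).symm
    · simp [σ, hx]
  have hrange : ∀ C, C ∈ Set.range g ↔ C ≠ G.connectedComponentMk v := by
    intro C
    constructor
    · rintro ⟨D, rfl⟩
      induction D using ConnectedComponent.ind with | _ y => ?_
      rw [hg_mk]
      by_cases hy : G.Reachable y v
      · simpa [σ, hy, ConnectedComponent.eq] using huv
      · simp [σ, hy, ConnectedComponent.eq]
    · induction C using ConnectedComponent.ind with | _ x => ?_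
      intro hx
      rw [ne_eq, ConnectedComponent.eq] at hx
      exact ⟨G'.connectedComponentMk x, by simp [hg_mk, σ, hx]⟩
  calc Nat.card G'.ConnectedComponent + 1
      = Nat.card {C // C ≠ G.connectedComponentMk v} + 1 := by
        rw [Nat.card_congr ((Equiv.ofInjective g hg.injective).trans
          (Equiv.subtypeEquivRight hrange))]
    _ = Nat.card G.ConnectedComponent := by
        rw [← Finite.card_option, Nat.card_congr (Equiv.optionSubtypeNe _)]

end SimpleGraph

theorem Finset.sum_le_sum_of_card_filter_le {ι β : Type*} [AddCommMonoid β] [LinearOrder β]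
    [IsOrderedAddMonoid β] {f : ι → β} {s t : Finset ι} (hst : s.card = t.card)
    (h : ∀ c, (t.filter (f · ≤ c)).card ≤ (s.filter (f · ≤ c)).card) :
    ∑ i ∈ s, f i ≤ ∑ i ∈ t, f i := by
  classical
  induction ht : t.card generalizing s t with
  | zero => simp_all
  | succ n ih =>
    obtain ⟨b, hb, hb_max⟩ := t.exists_max_image f (Finset.card_pos.mp (by omega))
    obtain ⟨a, ha, ha_max⟩ := s.exists_max_image f (Finset.card_pos.mp (by omega))
    have hs_le : ∀ i ∈ s, f i ≤ f b := by
      have := h (f b)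
      rw [Finset.filter_true_of_mem hb_max, ← hst] at this
      exact fun i hi => (Finset.filter_card_eq (le_antisymm (Finset.card_filter_le _ _) this) i hi)
    have hab : f a ≤ f b := hs_le a ha
    have hcard : (s.erase a).card = (t.erase b).card := by
      rw [Finset.card_erase_of_mem ha, Finset.card_erase_of_mem hb, hst]
    have herase : ∑ i ∈ s.erase a, f i ≤ ∑ i ∈ t.erase b, f i := by
      refine ih hcard (fun c => ?_) (by rw [Finset.card_erase_of_mem hb, ht]; rfl)
      by_cases hac : f a ≤ c
      · rw [Finset.filter_true_of_mem fun i hi => (ha_max i (Finset.mem_of_mem_erase hi)).trans hac,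
          hcard]
        exact Finset.card_filter_le _ _
      · have hbc : ¬f b ≤ c := fun hbc => hac (hab.trans hbc)
        have hb' : b ∉ t.filter (f · ≤ c) := fun hb' => hbc (Finset.mem_filter.mp hb').2
        have ha' : a ∉ s.filter (f · ≤ c) := fun ha' => hac (Finset.mem_filter.mp ha').2
        rw [Finset.filter_erase, Finset.filter_erase, Finset.erase_eq_of_notMem hb',
          Finset.erase_eq_of_notMem ha']
        exact h c
    rw [← Finset.add_sum_erase s f ha, ← Finset.add_sum_erase t f hb]
    exact add_le_add hab herase

section EdgeSets

variable {W : Type*} {A B : Finset (Sym2 W)}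

lemma toSG_mono_s1 (h : A ⊆ B) : toSG A ≤ toSG B :=
  fromEdgeSet_mono (Finset.coe_subset.mpr h)

def IsForest (A : Finset (Sym2 W)) : Prop :=
  (toSG A).IsAcyclic ∧ ∀ e ∈ A, ¬e.IsDiag

lemma IsForest.mono (hB : IsForest B) (hAB : A ⊆ B) : IsForest A :=
  ⟨hB.1.anti (toSG_mono_s1 hAB), fun e he => hB.2 e (hAB he)⟩

lemma edist_eq_top_of_not_spans {H : Finset (Sym2 W)} {e : Sym2 W} (w : Sym2 W → ℝ)
    (he : ¬(toSG H).Spans e) : edist H w e = ⊤ := by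
  refine sInf_eq_top.mpr ?_
  rintro x ⟨u, v, p, rfl, -⟩
  exact absurd p.reachable he

lemma IsMST.of_subset {w : Sym2 W → ℝ} {E H Z : Finset (Sym2 W)} (hZ : IsMST w E Z)
    (hZH : Z ⊆ H) (hHE : H ⊆ E) : IsMST w H Z :=
  ⟨hZH, hZ.2.1, fun T hTH hT => hZ.2.2 T (hTH.trans hHE) hT⟩

variable [DecidableEq W]

lemma toSG_insert (u v : W) (A : Finset (Sym2 W)) :
    toSG (insert s(u, v) A) = toSG A ⊔ edge u v := by
  rw [toSG, toSG, edge, ← fromEdgeSet_union, Finset.coe_insert, Set.insert_eq, Set.union_comm]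

lemma toSG_filter_not_isDiag (A : Finset (Sym2 W)) :
    toSG (A.filter fun e => ¬e.IsDiag) = toSG A := by
  ext x y
  simp only [toSG, fromEdgeSet_adj, Finset.coe_filter, Set.mem_ofPred_eq, Finset.mem_coe,
    Sym2.mk_isDiag_iff]
  tauto

lemma reachable_toSG_insert {e : Sym2 W} (he : (toSG A).Spans e) :
    (toSG (insert e A)).Reachable = (toSG A).Reachable := by
  refine le_antisymm (reachable_le_of_adj_le fun x y hxy => ?_)
    (fun x y h => h.mono (toSG_mono_s1 (Finset.subset_insert e A)))
  rw [toSG, fromEdgeSet_adj, Finset.coe_insert, Set.mem_insert_iff] at hxy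
  rcases hxy with ⟨rfl | hxy, hne⟩
  · exact he
  · exact (fromEdgeSet_adj _ |>.mpr ⟨hxy, hne⟩).reachable

lemma IsForest.insert_of_not_spans (hA : IsForest A) {e : Sym2 W} (he : ¬(toSG A).Spans e) :
    IsForest (insert e A) := by
  induction e using Sym2.ind with
  | _ u v =>
  refine ⟨toSG_insert u v A ▸ hA.1.sup_edge_of_not_reachable he, fun f hf => ?_⟩
  rcases Finset.mem_insert.mp hf with rfl | hf
  · exact fun hd => he (spans_of_isDiag hd)
  · exact hA.2 f hf

lemma IsForest.not_reachable_of_insert {u v : W} (h : IsForest (insert s(u, v) A))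
    (huv : s(u, v) ∉ A) : ¬(toSG A).Reachable u v := by
  have hne : u ≠ v := fun huv' =>
    h.2 _ (Finset.mem_insert_self _ _) (huv' ▸ Sym2.mk_isDiag_iff.mpr rfl)
  intro hr
  rcases (isAcyclic_sup_fromEdgeSet_iff.mp (toSG_insert u v A ▸ h.1)).2 hr with h' | h'
  · exact hne h'
  · exact huv (fromEdgeSet_adj _ |>.mp h').1

lemma IsForest.card_add_card_connectedComponent [Fintype W] (hA : IsForest A) :
    A.card + Nat.card (toSG A).ConnectedComponent = Fintype.card W := by
  induction A using Finset.induction_on with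
  | empty =>
    rw [Finset.card_empty, zero_add, show toSG (∅ : Finset (Sym2 W)) = ⊥ by simp [toSG],
      card_connectedComponent_bot, Nat.card_eq_fintype_card]
  | @insert e A he ih =>
    induction e using Sym2.ind with
    | _ u v =>
    have hsup := card_connectedComponent_sup_edge_add_one (IsForest.not_reachable_of_insert hA he)
    rw [← toSG_insert] at hsup
    rw [Finset.card_insert_of_notMem he, ← ih (hA.mono (Finset.subset_insert _ _))]
    omega

lemma IsForest.card_le_card [Fintype W] (hA : IsForest A) (hB : IsForest B)
    (hAB : (toSG A).Reachable ≤ (toSG B).Reachable) : A.card ≤ B.card := by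
  have hcc := card_connectedComponent_le_of_reachable_le hAB
  have hA' := hA.card_add_card_connectedComponent
  have hB' := hB.card_add_card_connectedComponent
  omega

/-- `step K e` is what an edge-scanning algorithm keeps after looking at `e` with `K` kept so far:
it may drop `e` only when `K` already connects its endpoints. -/
def IsSpanningStep (step : Finset (Sym2 W) → Sym2 W → Finset (Sym2 W)) : Prop :=
  ∀ K e, step K e = insert e K ∨ (step K e = K ∧ (toSG K).Spans e)

namespace IsSpanningStep

variable {step : Finset (Sym2 W) → Sym2 W → Finset (Sym2 W)}

lemma foldl_subset (hstep : IsSpanningStep step) (l : List (Sym2 W)) (K : Finset (Sym2 W)) :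
    l.foldl step K ⊆ K ∪ l.toFinset := by
  induction l generalizing K with
  | nil => simp
  | cons e l ih =>
    refine (ih (step K e)).trans ?_
    rw [List.toFinset_cons, Finset.union_insert]
    rcases hstep K e with h | ⟨h, -⟩ <;> rw [h]
    · rw [Finset.insert_union]
    · exact Finset.subset_insert e _

lemma reachable_filter_foldl (hstep : IsSpanningStep step) (w : Sym2 W → ℝ) (c : ℝ)
    {l : List (Sym2 W)} (hl : l.Pairwise (fun a b => w a ≤ w b)) {K : Finset (Sym2 W)}
    (hK : ∀ k ∈ K, ∀ e ∈ l, w k ≤ w e) :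
    (toSG ((l.foldl step K).filter (w · ≤ c))).Reachable =
      (toSG ((K ∪ l.toFinset).filter (w · ≤ c))).Reachable := by
  induction l generalizing K with
  | nil => simp
  | cons e l ih =>
    rw [List.pairwise_cons] at hl
    have hK' : ∀ k ∈ step K e, ∀ e' ∈ l, w k ≤ w e' := by
      intro k hk e' he'
      have hk' : k ∈ insert e K := by
        rcases hstep K e with h | ⟨h, -⟩ <;> rw [h] at hk
        exacts [hk, Finset.mem_insert_of_mem hk]
      rcases Finset.mem_insert.mp hk' with rfl | hk'
      · exact hl.1 e' he'
      · exact hK k hk' e' (List.mem_cons_of_mem e he')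
    rw [List.foldl_cons, ih hl.2 hK', List.toFinset_cons, Finset.union_insert]
    rcases hstep K e with h | ⟨h, hspan⟩ <;> rw [h]
    · rw [Finset.insert_union]
    rw [Finset.filter_insert]
    split_ifs with hec
    · -- every edge of `K` is at most as heavy as `e`, so survives the filter and spans `e`
      refine (reachable_toSG_insert (hspan.mono (toSG_mono_s1 fun k hk => ?_))).symm
      exact Finset.mem_filter.mpr ⟨Finset.mem_union_left _ hk,
        (hK k hk e List.mem_cons_self).trans hec⟩
    · rfl

end IsSpanningStep

open Classical in
noncomputable def kruskalStep (K : Finset (Sym2 W)) (e : Sym2 W) : Finset (Sym2 W) :=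
  if (toSG K).Spans e then K else insert e K

lemma isSpanningStep_kruskalStep : IsSpanningStep (kruskalStep (W := W)) := by
  intro K e
  unfold kruskalStep
  split_ifs with h
  exacts [Or.inr ⟨rfl, h⟩, Or.inl rfl]

lemma isForest_foldl_kruskalStep (l : List (Sym2 W)) {K : Finset (Sym2 W)} (hK : IsForest K) :
    IsForest (l.foldl kruskalStep K) := by
  induction l generalizing K with
  | nil => exact hK
  | cons e l ih =>
    refine ih ?_
    unfold kruskalStep
    split_ifs with h
    exacts [hK, hK.insert_of_not_spans h]

open Classical in
noncomputable def greedyStep (w : Sym2 W → ℝ) (t : ℝ) (H : Finset (Sym2 W)) (e : Sym2 W) :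
    Finset (Sym2 W) :=
  if ENNReal.ofReal (t * w e) < edist H w e then insert e H else H

lemma greedyList_eq_foldl (w : Sym2 W → ℝ) (t : ℝ) (l : List (Sym2 W)) (H : Finset (Sym2 W)) :
    greedyList w t l H = l.foldl (greedyStep w t) H := by
  induction l generalizing H with
  | nil => rfl
  | cons e l ih => exact ih _

lemma isSpanningStep_greedyStep (w : Sym2 W → ℝ) (t : ℝ) : IsSpanningStep (greedyStep w t) := by
  intro H e
  unfold greedyStep
  split_ifs with h
  · exact Or.inl rfl
  · refine Or.inr ⟨rfl, by_contra fun he => h ?_⟩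
    rw [edist_eq_top_of_not_spans w he]
    exact ENNReal.ofReal_lt_top

theorem isMST_of_reachable_filter_eq [Fintype W] {w : Sym2 W → ℝ} {E Z : Finset (Sym2 W)}
    (hZE : Z ⊆ E) (hZ : IsForest Z) (hE : (toSG E).Connected)
    (hw : ∀ e ∈ E, e.IsDiag → 0 ≤ w e)
    (hlevel : ∀ c, (toSG (Z.filter (w · ≤ c))).Reachable =
      (toSG (E.filter (w · ≤ c))).Reachable) :
    IsMST w E Z := by
  obtain ⟨cmax, hcmax⟩ := (E.image w).bddAbove
  have hreach : (toSG Z).Reachable = (toSG E).Reachable := by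
    have hE_le : ∀ e ∈ E, w e ≤ cmax := fun e he => hcmax (Finset.mem_image_of_mem w he)
    simpa only [Finset.filter_true_of_mem hE_le,
      Finset.filter_true_of_mem fun e he => hE_le e (hZE he)] using hlevel cmax
  have hZconn : (toSG Z).Connected :=
    { preconnected := fun x y => hreach ▸ hE.preconnected x y, nonempty := hE.nonempty }
  refine ⟨hZE, ⟨hZconn, hZ.1⟩, fun T hTE hT => ?_⟩
  set T₀ := T.filter fun e => ¬e.IsDiag
  have hT₀ : IsForest T₀ :=
    ⟨toSG_filter_not_isDiag T ▸ hT.isAcyclic, fun e he => (Finset.mem_filter.mp he).2⟩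
  have hT₀_le : (toSG T₀).Reachable ≤ (toSG Z).Reachable :=
    hreach ▸ fun x y h => h.mono (toSG_mono_s1 ((Finset.filter_subset _ _).trans hTE))
  have hZ_le : (toSG Z).Reachable ≤ (toSG T₀).Reachable := by
    rw [toSG_filter_not_isDiag]
    exact fun x y _ => hT.preconnected x y
  have hweight : gweight w T₀ ≤ gweight w T :=
    Finset.sum_le_sum_of_subset_of_nonneg (Finset.filter_subset _ _)
      fun e he he₀ => hw e (hTE he) (by simpa [T₀, he] using he₀)
  refine le_trans (Finset.sum_le_sum_of_card_filter_le
    (le_antisymm (hZ.card_le_card hT₀ hZ_le) (hT₀.card_le_card hZ hT₀_le)) fun c => ?_) hweight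
  refine (hT₀.mono (Finset.filter_subset _ _)).card_le_card (hZ.mono (Finset.filter_subset _ _)) ?_
  rw [hlevel c]
  exact fun x y h => h.mono
    (toSG_mono_s1 (Finset.filter_subset_filter _ ((Finset.filter_subset _ _).trans hTE)))

end EdgeSets

theorem greedy_contains_mst_general (E H : Finset (Sym2 V)) (w : Sym2 V → ℝ) (t : ℝ)
    (hw : ∀ e ∈ E, 0 < w e) (hconn : (toSG E).Connected)
    (hH : IsGreedy w t E H) :
    ∃ Z : Finset (Sym2 V), Z ⊆ H ∧ IsMST w E Z ∧ IsMST w H Z := by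
  obtain ⟨l, -, hlE, hl, rfl⟩ := hH
  have hE : l.toFinset = E := by ext; simp [hlE]
  rw [greedyList_eq_foldl]
  set H := l.foldl (greedyStep w t) ∅
  have hHE : H ⊆ E := by simpa [hE] using (isSpanningStep_greedyStep w t).foldl_subset l ∅
  set lH := l.filter (· ∈ H)
  have hlH : lH.toFinset = H := by ext e; simpa [lH, hE] using fun he => hHE he
  set Z := lH.foldl kruskalStep ∅
  have hZH : Z ⊆ H := by simpa [hlH] using isSpanningStep_kruskalStep.foldl_subset lH ∅
  have hZ : IsForest Z := isForest_foldl_kruskalStep lH ⟨by simp [toSG], by simp⟩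
  have hlevel : ∀ c, (toSG (Z.filter (w · ≤ c))).Reachable =
      (toSG (E.filter (w · ≤ c))).Reachable := fun c => by
    have hHc := (isSpanningStep_greedyStep w t).reachable_filter_foldl w c hl (K := ∅) (by simp)
    have hZc := isSpanningStep_kruskalStep.reachable_filter_foldl w c (l := lH) (hl.filter _)
      (K := ∅) (by simp)
    rw [Finset.empty_union, hE] at hHc
    rw [Finset.empty_union, hlH] at hZc
    exact hZc.trans hHc
  have hMST : IsMST w E Z :=
    isMST_of_reachable_filter_eq (hZH.trans hHE) hZ hconn (fun e he _ => (hw e he).le) hlevel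
  exact ⟨Z, hZH, hMST, hMST.of_subset hZH hHE⟩

/-- The greedy `t`-spanner `H` of a weighted graph `G` contains
all edges of some minimum spanning tree of `G`; consequently `G` and `H` share a
common MST. -/
theorem greedy_contains_mst (E H : Finset (Sym2 V)) (w : Sym2 V → ℝ) (t : ℝ)
    (ht : 1 ≤ t) (hw : ∀ e ∈ E, 0 < w e) (hconn : (toSG E).Connected)
    (hH : IsGreedy w t E H) :
    ∃ Z : Finset (Sym2 V), Z ⊆ H ∧ IsMST w E Z ∧ IsMST w H Z :=
  greedy_contains_mst_general E H w t hw hconn hH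
end

section
/- Weight optimality of the greedy spanner against spanners of its induced metric: Let M be a metric space, t ≥ 1, and H the greedy t-spanner of M. Then for every t-spanner H' of the metric space M_H induced by H, w(H) ≤ w(H'). -/
open SimpleGraph
open scoped ENNReal

variable {V : Type*} [Fintype V] [DecidableEq V]

/-!
Greedy builds `H` edge by edge, adding `g` only when `t · w(g)` is below the current distance
between its endpoints; edges arriving later are heavier, and a short detour through such an edge
`e` would give a short detour around `e` through `g`.  Hence every edge `g` of `H` satisfies
`t · w(g) < d_{H - g}(g)`.  Now replace every edge of `H'` by a shortest `H`-path between its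
endpoints.  If some `g ∈ H` lay on none of these paths, the `H'`-path between the endpoints of `g`
would become an `H - g`-path of weight at most `t · d_H(g) ≤ t · w(g)`.  So the paths cover `H`,
and `w(H)` is at most the sum of their weights, which is `w_H(H')`.
-/

lemma Finset.sum_biUnion_le_of_nonneg {ι α : Type*} [DecidableEq α] {f : α → ℝ}
    (hf : ∀ a, 0 ≤ f a) (s : Finset ι) (route : ι → Finset α) :
    ∑ a ∈ s.biUnion route, f a ≤ ∑ i ∈ s, ∑ a ∈ route i, f a := by
  rw [← Finset.sup_eq_biUnion]
  refine s.apply_sup_le_sum (f := fun r => ∑ a ∈ r, f a) (by simp) fun {r r'} => ?_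
  rw [← Finset.sum_union_inter]
  exact le_add_of_nonneg_right (Finset.sum_nonneg fun a _ => hf a)

namespace GreedySpanner

open Finset

variable {V : Type*} {w w' : Sym2 V → ℝ} {t : ℝ} {E S H H' : Finset (Sym2 V)} {a b c u v : V}

section WalkWeight

variable {G G' : SimpleGraph V}

@[simp]
lemma walkWeight_nil : walkWeight w (Walk.nil : G.Walk u u) = 0 := by
  simp [walkWeight]

@[simp]
lemma walkWeight_cons (h : G.Adj u v) (p : G.Walk v c) :
    walkWeight w (Walk.cons h p) = ENNReal.ofReal (w s(u, v)) + walkWeight w p := by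
  simp [walkWeight]

@[simp]
lemma walkWeight_append (p : G.Walk u v) (q : G.Walk v c) :
    walkWeight w (p.append q) = walkWeight w p + walkWeight w q := by
  simp [walkWeight, Walk.edges_append]

@[simp]
lemma walkWeight_reverse (p : G.Walk u v) : walkWeight w p.reverse = walkWeight w p := by
  simp [walkWeight, Walk.edges_reverse, List.map_reverse, List.sum_reverse]

@[simp]
lemma walkWeight_transfer (p : G.Walk u v) (hp : ∀ e ∈ p.edges, e ∈ G'.edgeSet) :
    walkWeight w (p.transfer G' hp) = walkWeight w p := by
  simp [walkWeight, Walk.edges_transfer]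

lemma walkWeight_bypass_le [DecidableEq V] (p : G.Walk u v) :
    walkWeight w p.bypass ≤ walkWeight w p :=
  (p.edges_bypass_sublist_edges.map _).sum_le_sum fun _ _ => zero_le

lemma walkWeight_eq_sum_toFinset [DecidableEq V] {p : G.Walk u v} (hp : p.IsPath) :
    walkWeight w p = ∑ e ∈ p.edges.toFinset, ENNReal.ofReal (w e) :=
  (List.sum_toFinset _ hp.isTrail.edges_nodup).symm

end WalkWeight

section Distance

lemma toSG_adj : (toSG E).Adj a b ↔ s(a, b) ∈ E ∧ a ≠ b :=
  SimpleGraph.fromEdgeSet_adj _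

lemma mem_of_mem_edges {p : (toSG E).Walk u v} {e : Sym2 V} (he : e ∈ p.edges) : e ∈ E := by
  have := p.edges_subset_edgeSet he
  rw [toSG, SimpleGraph.edgeSet_fromEdgeSet] at this
  exact this.1

lemma edist_le_walkWeight {G : SimpleGraph V} (p : G.Walk a b) (hp : ∀ e ∈ p.edges, e ∈ E) :
    edist E w s(a, b) ≤ walkWeight w p := by
  refine sInf_le ⟨a, b, p.transfer (toSG E) fun e he => ?_, rfl, walkWeight_transfer _ _⟩
  rw [toSG, SimpleGraph.edgeSet_fromEdgeSet]
  exact ⟨hp e he, G.not_isDiag_of_mem_edgeSet (p.edges_subset_edgeSet he)⟩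

lemma edist_mk_eq_iInf : edist E w s(a, b) = ⨅ p : (toSG E).Walk a b, walkWeight w p := by
  refine le_antisymm (le_iInf fun p => edist_le_walkWeight p fun _ => mem_of_mem_edges) ?_
  refine le_sInf ?_
  rintro x ⟨u, v, p, huv, rfl⟩
  rcases Sym2.eq_iff.mp huv with ⟨rfl, rfl⟩ | ⟨rfl, rfl⟩
  · exact iInf_le _ p
  · exact (iInf_le _ p.reverse).trans_eq (walkWeight_reverse p)

lemma edist_mono (hES : E ⊆ S) (f : Sym2 V) : edist S w f ≤ edist E w f := by
  induction f using Sym2.ind with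
  | _ a b =>
    rw [edist_mk_eq_iInf (E := E)]
    exact le_iInf fun p => edist_le_walkWeight p fun _ he => hES (mem_of_mem_edges he)

lemma edist_diag : edist E w s(a, a) = 0 :=
  nonpos_iff_eq_zero.mp <| (edist_le_walkWeight (Walk.nil : (toSG E).Walk a a) (by simp)).trans
    walkWeight_nil.le

lemma edist_le_of_mem {f : Sym2 V} (hf : f ∈ E) : edist E w f ≤ ENNReal.ofReal (w f) := by
  induction f using Sym2.ind with
  | _ a b =>
    by_cases hab : a = b
    · subst hab
      simp [edist_diag]
    · have hadj : (toSG E).Adj a b := toSG_adj.mpr ⟨hf, hab⟩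
      simpa using edist_le_walkWeight (w := w) (Walk.cons hadj Walk.nil)
        fun _ h => mem_of_mem_edges h

lemma exists_walk_edges_subset_biUnion [DecidableEq V] {G : SimpleGraph V}
    {route : Sym2 V → Finset (Sym2 V)}
    (hroute : ∀ a b, s(a, b) ∈ H' → ∃ q : G.Walk a b,
      walkWeight w q ≤ ENNReal.ofReal (w' s(a, b)) ∧ ∀ e ∈ q.edges, e ∈ route s(a, b))
    (p : (toSG H').Walk u v) :
    ∃ q : G.Walk u v,
      walkWeight w q ≤ walkWeight w' p ∧ ∀ e ∈ q.edges, e ∈ H'.biUnion route := by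
  induction p with
  | nil => exact ⟨Walk.nil, by simp, by simp⟩
  | cons hadj p ih =>
    have hmem := (toSG_adj.mp hadj).1
    obtain ⟨q₁, hq₁, hq₁e⟩ := hroute _ _ hmem
    obtain ⟨q₂, hq₂, hq₂e⟩ := ih
    refine ⟨q₁.append q₂, ?_, fun e he => ?_⟩
    · rw [walkWeight_append, walkWeight_cons]
      gcongr
    rcases List.mem_append.mp (Walk.edges_append q₁ q₂ ▸ he) with he | he
    · exact mem_biUnion.mpr ⟨_, hmem, hq₁e e he⟩
    · exact hq₂e e he

lemma edist_biUnion_le [DecidableEq V] {G : SimpleGraph V} {route : Sym2 V → Finset (Sym2 V)}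
    (hroute : ∀ a b, s(a, b) ∈ H' → ∃ q : G.Walk a b,
      walkWeight w q ≤ ENNReal.ofReal (w' s(a, b)) ∧ ∀ e ∈ q.edges, e ∈ route s(a, b))
    (f : Sym2 V) : edist (H'.biUnion route) w f ≤ edist H' w' f := by
  induction f using Sym2.ind with
  | _ a b =>
    rw [edist_mk_eq_iInf (E := H')]
    refine le_iInf fun p => ?_
    obtain ⟨q, hq, hqe⟩ := exists_walk_edges_subset_biUnion hroute p
    exact (edist_le_walkWeight q hqe).trans hq

variable [Fintype V]

lemma exists_isPath_walkWeight_eq_edist (h : edist E w s(a, b) ≠ ⊤) :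
    ∃ p : (toSG E).Walk a b, p.IsPath ∧ walkWeight w p = edist E w s(a, b) := by
  classical
  rw [edist_mk_eq_iInf] at h ⊢
  obtain ⟨p₀⟩ : Nonempty ((toSG E).Walk a b) := by
    by_contra hempty
    rw [not_nonempty_iff] at hempty
    exact h (iInf_of_empty _)
  have : Nonempty ((toSG E).Path a b) := ⟨⟨p₀.bypass, p₀.bypass_isPath⟩⟩
  obtain ⟨p, hp⟩ :=
    exists_eq_ciInf_of_finite (f := fun p : (toSG E).Path a b => walkWeight w p.1)
  refine ⟨p.1, p.2, hp.trans (le_antisymm (le_iInf fun q => ?_) (le_iInf fun q => ?_))⟩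
  · exact (iInf_le _ ⟨q.bypass, q.bypass_isPath⟩).trans (walkWeight_bypass_le q)
  · exact iInf_le _ q.1

lemma edist_mk_triangle : edist E w s(a, c) ≤ edist E w s(a, b) + edist E w s(b, c) := by
  by_cases hab : edist E w s(a, b) = ⊤
  · simp [hab]
  by_cases hbc : edist E w s(b, c) = ⊤
  · simp [hbc]
  obtain ⟨p, -, hp⟩ := exists_isPath_walkWeight_eq_edist hab
  obtain ⟨q, -, hq⟩ := exists_isPath_walkWeight_eq_edist hbc
  calc edist E w s(a, c) ≤ walkWeight w (p.append q) :=
        edist_le_walkWeight _ fun _ he => mem_of_mem_edges he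
    _ = _ := by rw [walkWeight_append, hp, hq]

variable [DecidableEq V]

lemma edist_insert_cases {e : Sym2 V} (P : (toSG (insert e S)).Walk a b) :
    edist S w s(a, b) ≤ walkWeight w P ∨ ∃ x y, e = s(x, y) ∧
      edist S w s(a, x) + ENNReal.ofReal (w e) + edist S w s(y, b) ≤ walkWeight w P := by
  induction P with
  | nil => exact Or.inl (by rw [edist_diag]; exact zero_le)
  | @cons a x b hax P ih =>
    rw [walkWeight_cons]
    by_cases he : s(a, x) = e
    · subst he
      have hright : edist S w s(x, b) ≤ walkWeight w P →
          edist S w s(a, a) + ENNReal.ofReal (w s(a, x)) + edist S w s(x, b) ≤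
            ENNReal.ofReal (w s(a, x)) + walkWeight w P := fun h => by
        rw [edist_diag, zero_add]; gcongr
      rcases ih with h | ⟨y, z, hyz, h⟩
      · exact Or.inr ⟨a, x, rfl, hright h⟩
      have hz : edist S w s(z, b) ≤ walkWeight w P := le_add_self.trans h
      -- if the later crossing of `e` ends at `a`, what follows it is an `S`-walk from `a`
      rcases Sym2.mem_iff.mp (hyz ▸ Sym2.mem_mk_right y z : z ∈ s(a, x)) with rfl | rfl
      · exact Or.inl (hz.trans le_add_self)
      · exact Or.inr ⟨a, z, rfl, hright hz⟩
    · have hS : s(a, x) ∈ S := by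
        obtain ⟨hmem, -⟩ := toSG_adj.mp hax
        exact (Finset.mem_insert.mp hmem).resolve_left he
      have hstep : ∀ y, edist S w s(a, y) ≤ ENNReal.ofReal (w s(a, x)) + edist S w s(x, y) :=
        fun y => edist_mk_triangle.trans (add_le_add_left (edist_le_of_mem hS) _)
      rcases ih with h | ⟨y, z, hyz, h⟩
      · exact Or.inl ((hstep b).trans (by gcongr))
      refine Or.inr ⟨y, z, hyz, ?_⟩
      calc edist S w s(a, y) + ENNReal.ofReal (w e) + edist S w s(z, b)
          ≤ ENNReal.ofReal (w s(a, x)) + edist S w s(x, y) + ENNReal.ofReal (w e) +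
              edist S w s(z, b) := by gcongr; exact hstep y
        _ = ENNReal.ofReal (w s(a, x)) +
              (edist S w s(x, y) + ENNReal.ofReal (w e) + edist S w s(z, b)) := by ring
        _ ≤ _ := by gcongr

end Distance

section Greedy

variable [DecidableEq V]

lemma subset_greedyList (l : List (Sym2 V)) (H₀ : Finset (Sym2 V)) :
    H₀ ⊆ greedyList w t l H₀ := by
  induction l generalizing H₀ with
  | nil => exact subset_rfl
  | cons e l ih =>
    rw [greedyList]
    refine subset_trans ?_ (ih _)
    split_ifs
    · exact subset_insert _ _
    · exact subset_rfl

lemma edist_greedyList_le (hw : ∀ e, 0 ≤ w e) (ht : 1 ≤ t) {l : List (Sym2 V)}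
    (H₀ : Finset (Sym2 V)) {e : Sym2 V} (he : e ∈ l) :
    edist (greedyList w t l H₀) w e ≤ ENNReal.ofReal (t * w e) := by
  induction l generalizing H₀ with
  | nil => simp at he
  | cons f l ih =>
    rw [greedyList]
    rcases List.mem_cons.mp he with rfl | he
    · refine (edist_mono (subset_greedyList l _) e).trans ?_
      split_ifs with hlt
      · exact (edist_le_of_mem (mem_insert_self _ _)).trans
          (ENNReal.ofReal_le_ofReal (le_mul_of_one_le_left (hw e) ht))
      · exact not_lt.mp hlt
    · exact ih _ he

lemma _root_.IsGreedy.edist_le (hw : ∀ e, 0 ≤ w e) (ht : 1 ≤ t) (hH : IsGreedy w t E H)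
    {e : Sym2 V} (he : e ∈ E) : edist H w e ≤ ENNReal.ofReal (t * w e) := by
  obtain ⟨l, -, hlE, -, rfl⟩ := hH
  exact edist_greedyList_le hw ht ∅ ((hlE e).mpr he)

lemma _root_.IsGreedy.edist_ne_top [Fintype V] (hw : ∀ e, 0 ≤ w e) (ht : 1 ≤ t)
    (hH : IsGreedy w t (completeE V) H) (f : Sym2 V) : edist H w f ≠ ⊤ := by
  induction f using Sym2.ind with
  | _ a b =>
    by_cases hab : a = b
    · simp [hab, edist_diag]
    · refine ne_top_of_le_ne_top ENNReal.ofReal_ne_top (hH.edist_le hw ht ?_)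
      simpa [completeE] using hab

variable [Fintype V]

lemma lt_edist_insert_erase (ht : 0 ≤ t) {e g : Sym2 V} (hg : g ∈ H) (hge : w g ≤ w e)
    (hg_lt : ENNReal.ofReal (t * w g) < edist (H.erase g) w g)
    (he_lt : ENNReal.ofReal (t * w e) < edist H w e) :
    ENNReal.ofReal (t * w g) < edist (insert e (H.erase g)) w g := by
  induction g using Sym2.ind with
  | _ a b =>
    by_contra! hle
    obtain ⟨P, -, hP⟩ :=
      exists_isPath_walkWeight_eq_edist (hle.trans_lt ENNReal.ofReal_lt_top).ne
    rw [← hP] at hle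
    rcases edist_insert_cases P with hP' | ⟨x, y, rfl, hxy⟩
    · exact (hg_lt.trans_le (hP'.trans hle)).false
    set S := H.erase s(a, b)
    -- around `e = s(x, y)` through `g = s(a, b)`, along the two pieces of `P`
    have hdetour : edist H w s(x, y) ≤
        edist S w s(a, x) + ENNReal.ofReal (w s(a, b)) + edist S w s(y, b) := by
      calc edist H w s(x, y) ≤ edist H w s(x, a) + edist H w s(a, b) + edist H w s(b, y) :=
            edist_mk_triangle.trans (add_le_add_left edist_mk_triangle _)
        _ ≤ _ := by
            rw [Sym2.eq_swap (a := x), Sym2.eq_swap (a := b)]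
            gcongr
            exacts [edist_mono (erase_subset _ _) _, edist_le_of_mem hg,
              edist_mono (erase_subset _ _) _]
    have hcancel : edist H w s(x, y) + ENNReal.ofReal (w s(x, y)) ≤
        ENNReal.ofReal (t * w s(x, y)) + ENNReal.ofReal (w s(x, y)) := calc
      _ ≤ edist S w s(a, x) + ENNReal.ofReal (w s(x, y)) + edist S w s(y, b) +
            ENNReal.ofReal (w s(a, b)) := by
          grw [hdetour]; exact le_of_eq (by ring)
      _ ≤ ENNReal.ofReal (t * w s(a, b)) + ENNReal.ofReal (w s(a, b)) := by grw [hxy, hle]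
      _ ≤ _ := by gcongr
    exact he_lt.not_ge ((ENNReal.add_le_add_iff_right ENNReal.ofReal_ne_top).mp hcancel)

def IsIrredundant (w : Sym2 V → ℝ) (t : ℝ) (H : Finset (Sym2 V)) : Prop :=
  ∀ g ∈ H, ENNReal.ofReal (t * w g) < edist (H.erase g) w g

lemma IsIrredundant.insert (ht : 0 ≤ t) (hH : IsIrredundant w t H) {e : Sym2 V}
    (hHe : ∀ g ∈ H, w g ≤ w e) (he : ENNReal.ofReal (t * w e) < edist H w e) :
    IsIrredundant w t (insert e H) := by
  by_cases heH : e ∈ H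
  · rwa [insert_eq_of_mem heH]
  intro g hg
  rcases mem_insert.mp hg with rfl | hg
  · rwa [erase_insert heH]
  · rw [erase_insert_of_ne (ne_of_mem_of_not_mem hg heH).symm]
    exact lt_edist_insert_erase ht hg (hHe g hg) (hH g hg) he

lemma isIrredundant_greedyList (ht : 0 ≤ t) {l : List (Sym2 V)}
    (hl : l.Pairwise (fun a b => w a ≤ w b)) {H₀ : Finset (Sym2 V)}
    (hH₀l : ∀ g ∈ H₀, ∀ e ∈ l, w g ≤ w e) (hH₀ : IsIrredundant w t H₀) :
    IsIrredundant w t (greedyList w t l H₀) := by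
  induction l generalizing H₀ with
  | nil => exact hH₀
  | cons e l ih =>
    rw [List.pairwise_cons] at hl
    have hle : ∀ g ∈ insert e H₀, ∀ f ∈ l, w g ≤ w f := by
      intro g hg f hf
      rcases mem_insert.mp hg with rfl | hg
      exacts [hl.1 f hf, hH₀l g hg f (List.mem_cons_of_mem _ hf)]
    rw [greedyList]
    split_ifs with he
    · exact ih hl.2 hle (hH₀.insert ht (fun g hg => hH₀l g hg e List.mem_cons_self) he)
    · exact ih hl.2 (fun g hg => hle g (mem_insert_of_mem hg)) hH₀

lemma _root_.IsGreedy.isIrredundant (ht : 0 ≤ t) (hH : IsGreedy w t E H) :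
    IsIrredundant w t H := by
  obtain ⟨l, -, -, hl, rfl⟩ := hH
  exact isIrredundant_greedyList ht hl (by simp) (by simp [IsIrredundant])

end Greedy

section Covering

variable [DecidableEq V]

lemma exists_route [Fintype V] (hw : ∀ e, 0 ≤ w e) {f : Sym2 V} (hf : edist H w f ≠ ⊤) :
    ∃ R ⊆ H, ∑ e ∈ R, w e ≤ indw H w f ∧
      ∀ a b, f = s(a, b) → ∃ q : (toSG H).Walk a b,
        walkWeight w q ≤ ENNReal.ofReal (indw H w f) ∧ ∀ e ∈ q.edges, e ∈ R := by
  induction f using Sym2.ind with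
  | _ a b =>
    obtain ⟨p, hp, hpw⟩ := exists_isPath_walkWeight_eq_edist hf
    have hpw' : ENNReal.ofReal (indw H w s(a, b)) = walkWeight w p := by
      rw [indw, ENNReal.ofReal_toReal hf, hpw]
    refine ⟨p.edges.toFinset, fun e he => mem_of_mem_edges (List.mem_toFinset.mp he), ?_, ?_⟩
    · refine (ENNReal.ofReal_le_iff_le_toReal hf).mp ?_
      rw [← hpw, walkWeight_eq_sum_toFinset hp, ENNReal.ofReal_sum_of_nonneg fun e _ => hw e]
    · intro x y hxy
      rcases Sym2.eq_iff.mp hxy with ⟨rfl, rfl⟩ | ⟨rfl, rfl⟩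
      · exact ⟨p, hpw'.ge, fun e he => List.mem_toFinset.mpr he⟩
      · exact ⟨p.reverse, by rw [walkWeight_reverse, hpw'], fun e he => by simpa using he⟩

lemma IsIrredundant.subset_biUnion (ht : 0 ≤ t) (hH : IsIrredundant w t H)
    (hspan : ∀ u v, edist H' w' s(u, v) ≤ ENNReal.ofReal t * edist H w s(u, v))
    {route : Sym2 V → Finset (Sym2 V)} (hroute_sub : ∀ f, route f ⊆ H)
    (hroute : ∀ a b, s(a, b) ∈ H' → ∃ q : (toSG H).Walk a b,
      walkWeight w q ≤ ENNReal.ofReal (w' s(a, b)) ∧ ∀ e ∈ q.edges, e ∈ route s(a, b)) :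
    H ⊆ H'.biUnion route := by
  intro g hg
  by_contra hg'
  have hsub : H'.biUnion route ⊆ H.erase g := fun e he =>
    mem_erase.mpr ⟨ne_of_mem_of_not_mem he hg', biUnion_subset.mpr (fun f _ => hroute_sub f) he⟩
  induction g using Sym2.ind with
  | _ a b =>
    refine (hH _ hg).not_ge ?_
    calc edist (H.erase s(a, b)) w s(a, b)
        ≤ edist (H'.biUnion route) w s(a, b) := edist_mono hsub _
      _ ≤ edist H' w' s(a, b) := edist_biUnion_le hroute _
      _ ≤ ENNReal.ofReal t * edist H w s(a, b) := hspan a b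
      _ ≤ ENNReal.ofReal t * ENNReal.ofReal (w s(a, b)) := by grw [edist_le_of_mem hg]
      _ = ENNReal.ofReal (t * w s(a, b)) := (ENNReal.ofReal_mul ht).symm

end Covering

lemma mw_nonneg [MetricSpace V] (e : Sym2 V) : 0 ≤ mw V e := by
  induction e using Sym2.ind with
  | _ a b => exact dist_nonneg

end GreedySpanner

theorem greedy_weight_optimal_general {V : Type*} [MetricSpace V] [Fintype V] [DecidableEq V]
    (t : ℝ) (ht : 1 ≤ t) (H H' : Finset (Sym2 V))
    (hH : IsGreedy (mw V) t (completeE V) H)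
    (hH'span : ∀ u v : V, edist H' (indw H (mw V)) s(u, v) ≤
      ENNReal.ofReal t * edist H (mw V) s(u, v)) :
    gweight (mw V) H ≤ gweight (indw H (mw V)) H' := by
  have ht₀ : 0 ≤ t := zero_le_one.trans ht
  have hw : ∀ e, 0 ≤ mw V e := GreedySpanner.mw_nonneg
  choose route hroute_sub hroute_sum hroute_walk using
    fun f => GreedySpanner.exists_route hw (hH.edist_ne_top hw ht f)
  have hcover : H ⊆ H'.biUnion route :=
    (hH.isIrredundant ht₀).subset_biUnion ht₀ hH'span hroute_sub
      fun a b _ => hroute_walk _ a b rfl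
  calc gweight (mw V) H ≤ ∑ e ∈ H'.biUnion route, mw V e :=
        Finset.sum_le_sum_of_subset_of_nonneg hcover fun e _ _ => hw e
    _ ≤ ∑ f ∈ H', ∑ e ∈ route f, mw V e := Finset.sum_biUnion_le_of_nonneg hw _ _
    _ ≤ gweight (indw H (mw V)) H' := Finset.sum_le_sum fun f _ => hroute_sum f

/-- Weight optimality of the greedy spanner against spanners of
its induced metric: if `H` is the greedy `t`-spanner of a finite metric space
`M` and `H'` is any `t`-spanner of the metric space `M_H` induced by `H`, then
`w(H) ≤ w(H')`. -/
theorem greedy_weight_optimal {V : Type*} [MetricSpace V] [Fintype V] [DecidableEq V]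
    (t : ℝ) (ht : 1 ≤ t) (H H' : Finset (Sym2 V))
    (hH : IsGreedy (mw V) t (completeE V) H)
    (hH'sub : H' ⊆ completeE V)
    (hH'span : ∀ u v : V, edist H' (indw H (mw V)) s(u, v) ≤
      ENNReal.ofReal t * edist H (mw V) s(u, v)) :
    gweight (mw V) H ≤ gweight (indw H (mw V)) H' :=
  greedy_weight_optimal_general t ht H H' hH hH'span
end

section
/- Stretching a doubling metric by a factor at most 2 at most doubles the doubling dimension: if (M,δ) has doubling dimension ddim and H is a t-spanner of M with t ≤ 2, then the metric space M_H induced by H has doubling dimension at most 2·ddim. -/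
/-!
The induced metric `δ_H` satisfies `δ ≤ δ_H ≤ 2δ`. A `δ_H`-ball of radius `r` therefore lies in the
`δ`-ball of radius `r`; halving twice covers that by `2^k · 2^k` `δ`-balls of radius `r / 4`, and
each of these has `δ_H`-radius at most `r / 2`.
-/

open SimpleGraph
open scoped ENNReal

variable {V : Type*} [Fintype V] [DecidableEq V]

namespace HasDoublingDim

variable {M : Type*} {d : M → M → ℝ} {k : ℕ}

theorem exists_cover_quarter (h : HasDoublingDim d k) (x : M) (r : ℝ) :
    ∃ s : Finset M, s.card ≤ 2 ^ (2 * k) ∧ ∀ y, d x y ≤ r → ∃ c ∈ s, d c y ≤ r / 4 := by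
  classical
  obtain ⟨s, hs_card, hs⟩ := h x r
  choose f hf_card hf using fun c => h c (r / 2)
  refine ⟨s.biUnion f, ?_, fun y hy => ?_⟩
  · calc (s.biUnion f).card ≤ s.card * 2 ^ k :=
          Finset.card_biUnion_le_card_mul s f _ fun c _ => hf_card c
      _ ≤ 2 ^ k * 2 ^ k := Nat.mul_le_mul_right _ hs_card
      _ = 2 ^ (2 * k) := by rw [two_mul, pow_add]
  · obtain ⟨c, hc, hcy⟩ := hs y hy
    obtain ⟨c', hc', hc'y⟩ := hf c y hcy
    exact ⟨c', Finset.mem_biUnion.2 ⟨c, hc, hc'⟩, by linarith⟩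

theorem of_le_of_le_two_mul (h : HasDoublingDim d k) {d' : M → M → ℝ}
    (hle : ∀ x y, d x y ≤ d' x y) (hle_two_mul : ∀ x y, d' x y ≤ 2 * d x y) :
    HasDoublingDim d' (2 * k) := by
  intro x r
  obtain ⟨s, hs_card, hs⟩ := h.exists_cover_quarter x r
  refine ⟨s, hs_card, fun y hy => ?_⟩
  obtain ⟨c, hc, hcy⟩ := hs y ((hle x y).trans hy)
  exact ⟨c, hc, by linarith [hle_two_mul c y]⟩

end HasDoublingDim

theorem ofReal_dist_le_walkWeight {V : Type*} [MetricSpace V] {G : SimpleGraph V} {u v : V}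
    (p : G.Walk u v) :
    ENNReal.ofReal (dist u v) ≤ walkWeight (mw V) p := by
  induction p with
  | nil => simp [walkWeight]
  | @cons a b c hadj q ih =>
    calc ENNReal.ofReal (dist a c) ≤ ENNReal.ofReal (dist a b) + ENNReal.ofReal (dist b c) :=
          (ENNReal.ofReal_le_ofReal (dist_triangle a b c)).trans ENNReal.ofReal_add_le
      _ ≤ ENNReal.ofReal (mw V s(a, b)) + walkWeight (mw V) q := add_le_add le_rfl ih
      _ = walkWeight (mw V) (q.cons hadj) := by simp [walkWeight]

theorem ofReal_dist_le_edist {V : Type*} [MetricSpace V] (H : Finset (Sym2 V)) (u v : V) :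
    ENNReal.ofReal (dist u v) ≤ edist H (mw V) s(u, v) := by
  refine le_sInf ?_
  rintro _ ⟨a, b, p, hab, rfl⟩
  obtain ⟨rfl, rfl⟩ | ⟨rfl, rfl⟩ := Sym2.eq_iff.1 hab
  · exact ofReal_dist_le_walkWeight p
  · rw [_root_.dist_comm]
    exact ofReal_dist_le_walkWeight p

theorem doubling_of_stretched_general {V : Type*} [MetricSpace V]
    (t : ℝ) (ht2 : t ≤ 2) (H : Finset (Sym2 V)) (k : ℕ)
    (hHspan : ∀ u v : V, edist H (mw V) s(u, v) ≤ ENNReal.ofReal (t * dist u v))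
    (hdd : HasDoublingDim (fun u v : V => dist u v) k) :
    HasDoublingDim (fun u v : V => (edist H (mw V) s(u, v)).toReal) (2 * k) := by
  have hle_two_mul (u v : V) : edist H (mw V) s(u, v) ≤ ENNReal.ofReal (2 * dist u v) :=
    (hHspan u v).trans (ENNReal.ofReal_le_ofReal (mul_le_mul_of_nonneg_right ht2 dist_nonneg))
  refine hdd.of_le_of_le_two_mul (fun u v => ?_) (fun u v => ?_)
  · have hfinite := ne_top_of_le_ne_top ENNReal.ofReal_ne_top (hle_two_mul u v)
    exact (ENNReal.ofReal_le_iff_le_toReal hfinite).1 (ofReal_dist_le_edist H u v)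
  · exact ENNReal.toReal_le_of_le_ofReal (by positivity) (hle_two_mul u v)

/-- Stretching a doubling metric by a factor at most `2` at
most doubles the doubling dimension: if `(M, δ)` has doubling dimension `k` and
`H` is a `t`-spanner of `M` with `t ≤ 2`, then the metric induced by `H` has
doubling dimension at most `2 * k`. -/
theorem doubling_of_stretched {V : Type*} [MetricSpace V] [Fintype V] [DecidableEq V]
    (t : ℝ) (ht1 : 1 ≤ t) (ht2 : t ≤ 2) (H : Finset (Sym2 V)) (k : ℕ)
    (hHsub : H ⊆ completeE V)
    (hHspan : ∀ u v : V, edist H (mw V) s(u, v) ≤ ENNReal.ofReal (t * dist u v))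
    (hdd : HasDoublingDim (fun u v : V => dist u v) k) :
    HasDoublingDim (fun u v : V => (edist H (mw V) s(u, v)).toReal) (2 * k) :=
  doubling_of_stretched_general t ht2 H k hHspan hdd
end

section
/- If an edge e = (u,v) with weight w(e) belongs to the greedy t-spanner H of a graph G, then every simple path in H between u and v other than the edge e itself has weight strictly greater than t·w(e). -/
open SimpleGraph
open scoped ENNReal

variable {V : Type*} [Fintype V] [DecidableEq V]

/-! The conclusion is an invariant of the greedy pass: for every edge `e = s(u, v)` of the
current spanner, every `u`–`v` path avoiding `e` weighs more than `t * w e`. When `g` is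
inserted, a path through `g` avoiding an older edge `e` becomes, after swapping `g` for `e`, a
walk in the old spanner between the ends of `g`. That walk weighs at most as much as the path,
because `w e ≤ w g` by the processing order, and more than `t * w g ≥ t * w e`, because `g` was
inserted. -/

section

variable {V : Type*} {G G' : SimpleGraph V} (w : Sym2 V → ℝ)

namespace SimpleGraph.Walk

@[simp]
lemma walkWeight_nil {u : V} : walkWeight w (nil : G.Walk u u) = 0 := by
  simp [walkWeight]

@[simp]
lemma walkWeight_cons {u v x : V} (h : G.Adj u v) (p : G.Walk v x) :
    walkWeight w (cons h p) = ENNReal.ofReal (w s(u, v)) + walkWeight w p := by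
  simp [walkWeight]

@[simp]
lemma walkWeight_append {u v x : V} (p : G.Walk u v) (q : G.Walk v x) :
    walkWeight w (p.append q) = walkWeight w p + walkWeight w q := by
  simp [walkWeight, edges_append]

@[simp]
lemma walkWeight_reverse {u v : V} (p : G.Walk u v) :
    walkWeight w p.reverse = walkWeight w p := by
  simp [walkWeight, edges_reverse, List.map_reverse, List.sum_reverse]

@[simp]
lemma walkWeight_transfer {u v : V} (p : G.Walk u v) (hp : ∀ e ∈ p.edges, e ∈ G'.edgeSet) :
    walkWeight w (p.transfer G' hp) = walkWeight w p := by
  simp [walkWeight, edges_transfer]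

lemma IsPath.exists_walk_replace_edge {u v : V} {p : G.Walk u v} (hp : p.IsPath)
    {f : Sym2 V} (hf : f ∈ p.edges) (huv : G'.Adj u v)
    (hsub : ∀ e ∈ p.edges, e ≠ f → e ∈ G'.edgeSet) :
    ∃ (a b : V) (q : G'.Walk a b), f = s(a, b) ∧
      walkWeight w q + ENNReal.ofReal (w f) = walkWeight w p + ENNReal.ofReal (w s(u, v)) := by
  obtain ⟨d, hd, rfl⟩ := List.mem_map.mp hf
  obtain ⟨q, r, rfl⟩ := (isSubwalk_toWalk_adj_iff_mem_darts p).mpr hd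
  have hnodup := edges_nodup_of_support_nodup hp.support_nodup
  simp only [edges_append, Adj.edges_toWalk, List.append_assoc, List.singleton_append,
    List.nodup_append, List.nodup_cons] at hnodup hsub
  have hq : ∀ e ∈ q.edges, e ∈ G'.edgeSet := fun e he =>
    hsub e (List.mem_append_left _ he) fun h => hnodup.2.2 e he _ List.mem_cons_self h
  have hr : ∀ e ∈ r.edges, e ∈ G'.edgeSet := fun e he =>
    hsub e (List.mem_append_right _ (List.mem_cons_of_mem _ he))
      fun h => hnodup.2.1.1 (h ▸ he : d.edge ∈ r.edges)
  refine ⟨_, _, (q.transfer G' hq).reverse.append (cons huv (r.transfer G' hr).reverse), rfl, ?_⟩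
  simp only [reverse_transfer, walkWeight_append, walkWeight_transfer, walkWeight_reverse,
    walkWeight_cons, Dart.edge, Adj.toWalk, walkWeight_nil, add_zero]
  ring

end SimpleGraph.Walk

lemma toSG_adj {H : Finset (Sym2 V)} {u v : V} : (toSG H).Adj u v ↔ s(u, v) ∈ H ∧ u ≠ v :=
  fromEdgeSet_adj _

lemma mem_edgeSet_toSG {H : Finset (Sym2 V)} {e : Sym2 V} :
    e ∈ (toSG H).edgeSet ↔ e ∈ H ∧ ¬e.IsDiag := by
  simp [toSG]

lemma edist_le_walkWeight_s8 {H : Finset (Sym2 V)} {u v : V} (p : (toSG H).Walk u v) :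
    edist H w s(u, v) ≤ walkWeight w p :=
  sInf_le ⟨u, v, p, rfl, rfl⟩

variable (t : ℝ)

def HasLongDetours (H : Finset (Sym2 V)) : Prop :=
  ∀ u v : V, s(u, v) ∈ H → ∀ p : (toSG H).Walk u v, p.IsPath → s(u, v) ∉ p.edges →
    ENNReal.ofReal (t * w s(u, v)) < walkWeight w p

variable {w t}

lemma hasLongDetours_empty : HasLongDetours w t ∅ := by
  simp [HasLongDetours]

lemma HasLongDetours.ne {H : Finset (Sym2 V)} (hH : HasLongDetours w t H) {u v : V}
    (he : s(u, v) ∈ H) : u ≠ v := by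
  rintro rfl
  simpa using hH u u he .nil .nil (by simp)

lemma HasLongDetours.insert [DecidableEq V] {H : Finset (Sym2 V)} {g : Sym2 V}
    (hH : HasLongDetours w t H) (ht : 0 ≤ t) (hle : ∀ e ∈ H, w e ≤ w g)
    (hg : ENNReal.ofReal (t * w g) < edist H w g) : HasLongDetours w t (insert g H) := by
  intro u v he p hp hep
  have hsub : ∀ x ∈ p.edges, x ≠ g → x ∈ (toSG H).edgeSet := by
    intro x hx hxg
    have := mem_edgeSet_toSG.mp (p.edges_subset_edgeSet hx)
    exact mem_edgeSet_toSG.mpr ⟨(Finset.mem_insert.mp this.1).resolve_left hxg, this.2⟩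
  by_cases hgp : g ∈ p.edges
  · have heH : s(u, v) ∈ H :=
      (Finset.mem_insert.mp he).resolve_left fun h => hep (h ▸ hgp)
    obtain ⟨a, b, q, rfl, hq⟩ :=
      hp.exists_walk_replace_edge w hgp (toSG_adj.mpr ⟨heH, hH.ne heH⟩) hsub
    have hwe := hle _ heH
    calc ENNReal.ofReal (t * w s(u, v)) ≤ ENNReal.ofReal (t * w s(a, b)) := by gcongr
      _ < edist H w s(a, b) := hg
      _ ≤ walkWeight w q := edist_le_walkWeight_s8 w q
      _ ≤ walkWeight w p := by
        refine ENNReal.le_of_add_le_add_right (ENNReal.ofReal_ne_top (r := w s(a, b))) ?_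
        rw [hq]
        gcongr
  · have hp' : ∀ x ∈ p.edges, x ∈ (toSG H).edgeSet := fun x hx =>
      hsub x hx fun h => hgp (h ▸ hx)
    rw [← p.walkWeight_transfer w hp']
    rcases Finset.mem_insert.mp he with rfl | heH
    · exact hg.trans_le (edist_le_walkWeight_s8 w _)
    · exact hH u v heH _ (hp.transfer hp') (by simpa [Walk.edges_transfer] using hep)

lemma HasLongDetours.greedyList [DecidableEq V] (ht : 0 ≤ t) {l : List (Sym2 V)}
    (hl : l.Pairwise (fun a b => w a ≤ w b)) {H : Finset (Sym2 V)} (hH : HasLongDetours w t H)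
    (hHl : ∀ e ∈ H, ∀ g ∈ l, w e ≤ w g) : HasLongDetours w t (greedyList w t l H) := by
  induction l generalizing H with
  | nil => exact hH
  | cons g l ih =>
    rw [List.pairwise_cons] at hl
    have hHl' : ∀ e ∈ H, ∀ g' ∈ l, w e ≤ w g' := fun e he g' hg' =>
      hHl e he g' (List.mem_cons_of_mem _ hg')
    rw [_root_.greedyList]
    split_ifs with hg
    · refine ih hl.2 (hH.insert ht (fun e he => hHl e he g List.mem_cons_self) hg) ?_
      intro e he g' hg'
      rcases Finset.mem_insert.mp he with rfl | he
      exacts [hl.1 g' hg', hHl' e he g' hg']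
    · exact ih hl.2 hH hHl'

end

theorem greedy_second_path_general (E H : Finset (Sym2 V)) (w : Sym2 V → ℝ) (t : ℝ)
    (ht : 1 ≤ t)
    (hH : IsGreedy w t E H) :
    ∀ u v : V, s(u, v) ∈ H → ∀ p : (toSG H).Walk u v, p.IsPath →
      p.edges ≠ [s(u, v)] →
      ENNReal.ofReal (t * w s(u, v)) < walkWeight w p := by
  obtain ⟨l, -, -, hl, rfl⟩ := hH
  intro u v he p hp hne
  have hdet := hasLongDetours_empty.greedyList (zero_le_one.trans ht) hl (by simp)
  exact hdet u v he p hp fun h => hne (by rw [hp.eq_adj_toWalk_of_mem_edges h]; simp)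

/-- If an edge `e = (u,v)` belongs to the greedy `t`-spanner
`H` of `G`, then every simple path in `H` between `u` and `v` other than the
edge `e` itself has weight strictly greater than `t * w(e)`. -/
theorem greedy_second_path (E H : Finset (Sym2 V)) (w : Sym2 V → ℝ) (t : ℝ)
    (ht : 1 ≤ t) (hw : ∀ e ∈ E, 0 < w e)
    (hH : IsGreedy w t E H) :
    ∀ u v : V, s(u, v) ∈ H → ∀ p : (toSG H).Walk u v, p.IsPath →
      p.edges ≠ [s(u, v)] →
      ENNReal.ofReal (t * w s(u, v)) < walkWeight w p :=
  greedy_second_path_general E H w t ht hH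
end
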